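/- arXiv:2101.11566 — 2 statements merged into one kernel-verified Lean document; each statement's English description precedes it below -/
import Mathlib

section
/- Let Σ̄, Σ_O, Q be symmetric positive definite matrices and H a matrix of appropriate dimensions. Define Σ = (HᵀQ⁻¹H + Σ_O⁻¹ + Σ̄⁻¹)⁻¹ and K = ΣHᵀQ⁻¹. Then K = Σ̄(Σ̄+Σ_O)⁻¹Σ_O Hᵀ (H Σ̄(Σ̄+Σ_O)⁻¹Σ_O Hᵀ + Q)⁻¹, i.e., the Kalman gain admits a form not depending on Σ. -/
/-!
Writing `Λ = Σ_O⁻¹ + Σ̄⁻¹` for the combined prior information, `Σ̄(Σ̄+Σ_O)⁻¹Σ_O = Λ⁻¹` and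
`Σ = (HᵀQ⁻¹H + Λ)⁻¹`, so the claim is the equality of the information and covariance forms of
the Kalman gain, `(HᵀQ⁻¹H + Λ)⁻¹HᵀQ⁻¹ = Λ⁻¹Hᵀ(HΛ⁻¹Hᵀ + Q)⁻¹`. That is the push-through identity
`(HᵀQ⁻¹H + Λ) Λ⁻¹Hᵀ = HᵀQ⁻¹(HΛ⁻¹Hᵀ + Q)`; positive definiteness supplies all the inverses.
-/

open Matrix

namespace Matrix

theorem PosDef.mul_mul_transpose_add {n m : Type*} [Fintype n] [Fintype m]
    {P : Matrix n n ℝ} {Q : Matrix m m ℝ} (H : Matrix m n ℝ) (hP : P.PosSemidef) (hQ : Q.PosDef) :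
    (H * P * Hᵀ + Q).PosDef := by
  simpa using PosDef.posSemidef_add (hP.mul_mul_conjTranspose_same H) hQ

variable {n m α : Type*} [Fintype n] [DecidableEq n] [Fintype m] [DecidableEq m] [CommRing α]

theorem mul_add_inv_mul_eq_inv_add_inv_inv {A B : Matrix n n α} (hA : IsUnit A) (hB : IsUnit B) :
    A * (A + B)⁻¹ * B = (B⁻¹ + A⁻¹)⁻¹ := by
  rw [inv_add_inv (iff_of_true hB hA), mul_inv_rev, mul_inv_rev,
    nonsing_inv_nonsing_inv _ ((isUnit_iff_isUnit_det _).mp hA),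
    nonsing_inv_nonsing_inv _ ((isUnit_iff_isUnit_det _).mp hB), add_comm, mul_assoc]

theorem inv_add_mul_mul_inv_eq_inv_mul_mul_add_inv {Λ : Matrix n n α} {Q : Matrix m m α}
    (G : Matrix n m α) (H : Matrix m n α) (hΛ : IsUnit Λ) (hQ : IsUnit Q)
    (hS : IsUnit (H * Λ⁻¹ * G + Q)) (hM : IsUnit (G * Q⁻¹ * H + Λ)) :
    (G * Q⁻¹ * H + Λ)⁻¹ * G * Q⁻¹ = Λ⁻¹ * G * (H * Λ⁻¹ * G + Q)⁻¹ := by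
  have push_through :
      (G * Q⁻¹ * H + Λ) * (Λ⁻¹ * G) = G * Q⁻¹ * (H * Λ⁻¹ * G + Q) := by
    rw [Matrix.add_mul, Matrix.mul_add,
      mul_nonsing_inv_cancel_left _ _ ((isUnit_iff_isUnit_det _).mp hΛ),
      nonsing_inv_mul_cancel_right _ _ ((isUnit_iff_isUnit_det _).mp hQ)]
    simp only [Matrix.mul_assoc]
  calc (G * Q⁻¹ * H + Λ)⁻¹ * G * Q⁻¹
      = (G * Q⁻¹ * H + Λ)⁻¹ * (G * Q⁻¹ * (H * Λ⁻¹ * G + Q)) * (H * Λ⁻¹ * G + Q)⁻¹ := by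
        rw [← Matrix.mul_assoc _ (G * Q⁻¹), mul_nonsing_inv_cancel_right _ _
          ((isUnit_iff_isUnit_det _).mp hS), Matrix.mul_assoc _ G]
    _ = Λ⁻¹ * G * (H * Λ⁻¹ * G + Q)⁻¹ := by
        rw [← push_through, nonsing_inv_mul_cancel_left _ _ ((isUnit_iff_isUnit_det _).mp hM),
          Matrix.mul_assoc]

end Matrix

/-- The Kalman gain `K = ΣHᵀQ⁻¹`, with `Σ = (HᵀQ⁻¹H + Σ_O⁻¹ + Σ̄⁻¹)⁻¹`, admits a form
not depending on `Σ`: `K = Σ̄(Σ̄+Σ_O)⁻¹Σ_O Hᵀ (H Σ̄(Σ̄+Σ_O)⁻¹Σ_O Hᵀ + Q)⁻¹`. -/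
theorem kalman_gain_form {n m : ℕ}
    (Sb SO : Matrix (Fin n) (Fin n) ℝ) (Q : Matrix (Fin m) (Fin m) ℝ)
    (H : Matrix (Fin m) (Fin n) ℝ)
    (hSb : Sb.PosDef) (hSO : SO.PosDef) (hQ : Q.PosDef)
    :
    ∀ (Sig : Matrix (Fin n) (Fin n) ℝ) (Kg : Matrix (Fin n) (Fin m) ℝ),
      Sig = (Hᵀ * Q⁻¹ * H + SO⁻¹ + Sb⁻¹)⁻¹ →
      Kg = Sig * Hᵀ * Q⁻¹ →
      Kg = Sb * (Sb + SO)⁻¹ * SO * Hᵀ * (H * (Sb * (Sb + SO)⁻¹ * SO) * Hᵀ + Q)⁻¹ := by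
  rintro _ _ rfl rfl
  have hΛ : (SO⁻¹ + Sb⁻¹).PosDef := hSO.inv.add hSb.inv
  have hM : (Hᵀ * Q⁻¹ * H + (SO⁻¹ + Sb⁻¹)).PosDef := by
    simpa using PosDef.mul_mul_transpose_add Hᵀ hQ.inv.posSemidef hΛ
  rw [mul_add_inv_mul_eq_inv_add_inv_inv hSb.isUnit hSO.isUnit, add_assoc]
  exact inv_add_mul_mul_inv_eq_inv_mul_mul_add_inv Hᵀ H hΛ.isUnit hQ.isUnit
    (PosDef.mul_mul_transpose_add H hΛ.inv.posSemidef hQ).isUnit hM.isUnit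
end

section
/- With Σ̄, Σ_O, Q symmetric positive definite, H an m×n matrix, Σ = (HᵀQ⁻¹H + Σ_O⁻¹ + Σ̄⁻¹)⁻¹, and K = ΣHᵀQ⁻¹, the posterior covariance satisfies Σ = (I − KH)·Σ̄(Σ̄+Σ_O)⁻¹Σ_O. -/
/-! Since `Σ̄(Σ̄+Σ_O)⁻¹Σ_O = (Σ_O⁻¹ + Σ̄⁻¹)⁻¹ =: P`, the claim is the standard EKF identity
`Σ = (I − ΣHᵀQ⁻¹H)P` for `Σ = (HᵀQ⁻¹H + P⁻¹)⁻¹`, which holds because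
`I − ΣHᵀQ⁻¹H = Σ(Σ⁻¹ − HᵀQ⁻¹H) = ΣP⁻¹`. -/

open Matrix

namespace Matrix

variable {ι α : Type*} [Fintype ι] [DecidableEq ι] [CommRing α]

theorem inv_add_inv_inv {A B : Matrix ι ι α} (hA : IsUnit A) (hB : IsUnit B) :
    (A⁻¹ + B⁻¹)⁻¹ = B * (A + B)⁻¹ * A := by
  rw [inv_add_inv (iff_of_true hA hB), mul_inv_rev, mul_inv_rev,
    nonsing_inv_nonsing_inv _ ((isUnit_iff_isUnit_det A).mp hA),
    nonsing_inv_nonsing_inv _ ((isUnit_iff_isUnit_det B).mp hB), Matrix.mul_assoc]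

theorem one_sub_inv_mul_mul_sub_inv {M A : Matrix ι ι α} (hM : IsUnit M) (hMA : IsUnit (M - A)) :
    (1 - M⁻¹ * A) * (M - A)⁻¹ = M⁻¹ := by
  have hfactor : 1 - M⁻¹ * A = M⁻¹ * (M - A) := by
    rw [Matrix.mul_sub, nonsing_inv_mul _ ((isUnit_iff_isUnit_det M).mp hM)]
  rw [hfactor, Matrix.mul_assoc, mul_nonsing_inv _ ((isUnit_iff_isUnit_det _).mp hMA), Matrix.mul_one]

end Matrix

/-- Posterior covariance form of the modified EKF update with object uncertainty:
`Σ = (I − KH)·Σ̄(Σ̄+Σ_O)⁻¹Σ_O`. -/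
theorem kalman_posterior_covariance_form {n m : ℕ}
    (Sb SO : Matrix (Fin n) (Fin n) ℝ) (Q : Matrix (Fin m) (Fin m) ℝ)
    (H : Matrix (Fin m) (Fin n) ℝ)
    (hSb : Sb.PosDef) (hSO : SO.PosDef) (hQ : Q.PosDef) :
    ∀ (Sig : Matrix (Fin n) (Fin n) ℝ) (Kg : Matrix (Fin n) (Fin m) ℝ),
      Sig = (Hᵀ * Q⁻¹ * H + SO⁻¹ + Sb⁻¹)⁻¹ →
      Kg = Sig * Hᵀ * Q⁻¹ →
      Sig = (1 - Kg * H) * (Sb * (Sb + SO)⁻¹ * SO) := by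
  rintro Sig Kg rfl rfl
  have hInfo : (Hᵀ * Q⁻¹ * H).PosSemidef := by
    simpa using hQ.inv.posSemidef.conjTranspose_mul_mul_same H
  have hPriorPrec : (SO⁻¹ + Sb⁻¹).PosDef := hSO.inv.add hSb.inv
  have hPostPrec : (Hᵀ * Q⁻¹ * H + SO⁻¹ + Sb⁻¹).PosDef := by
    rw [add_assoc]; exact hPriorPrec.posSemidef_add hInfo
  have hPriorPrec_eq : Hᵀ * Q⁻¹ * H + SO⁻¹ + Sb⁻¹ - Hᵀ * Q⁻¹ * H = SO⁻¹ + Sb⁻¹ := by abel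
  rw [add_comm Sb SO, ← inv_add_inv_inv hSO.isUnit hSb.isUnit, Matrix.mul_assoc _ Hᵀ,
    Matrix.mul_assoc _ (Hᵀ * Q⁻¹), ← hPriorPrec_eq,
    one_sub_inv_mul_mul_sub_inv hPostPrec.isUnit (hPriorPrec_eq ▸ hPriorPrec.isUnit)]
end
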